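/- In the Witt setup, suppose a : R⊗M → V⊗M satisfies the curried Witt identity. Let ι : V → R be the inclusion of the span of the variables and set a⁰ := a∘(ι⊗id_M) : V⊗M → V⊗M. Then a⁰ satisfies the curried gl identity. -/
import Mathlib


open TensorProduct

set_option maxSynthPendingDepth 3
set_option synthInstance.maxHeartbeats 400000
set_option maxHeartbeats 1000000

namespace CurriedWitt

variable (k : Type) [CommRing k] (n : ℕ)

/-- `R = k[x_1, …, x_n]`. -/
abbrev R := MvPolynomial (Fin n) k

/-- `V ⊆ R`: the free `k`-submodule spanned by the variables `x_1, …, x_n`. -/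
noncomputable def V : Submodule k (R k n) :=
  Submodule.span k (Set.range (MvPolynomial.X : Fin n → R k n))

/-- The variable `x_i` as an element of `V`. -/
noncomputable def xV (i : Fin n) : V k n :=
  ⟨MvPolynomial.X i, Submodule.subset_span ⟨i, rfl⟩⟩

variable (M : Type) [AddCommGroup M] [Module k M]

/-- `Δ_W : R → V ⊗ R`, `f ↦ ∑ᵢ xᵢ ⊗ ∂f/∂xᵢ`. -/
noncomputable def ΔW : R k n →ₗ[k] (V k n) ⊗[k] (R k n) :=
  ∑ i : Fin n, (TensorProduct.mk k (V k n) (R k n) (xV k n i)) ∘ₗ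
    (MvPolynomial.pderiv i).toLinearMap

/-- The braiding `τ_{P,Q} ⊗ id_M : P ⊗ (Q ⊗ M) → Q ⊗ (P ⊗ M)`. -/
noncomputable def swapL (P Q : Type) [AddCommGroup P] [Module k P]
    [AddCommGroup Q] [Module k Q] :
    P ⊗[k] (Q ⊗[k] M) →ₗ[k] Q ⊗[k] (P ⊗[k] M) :=
  (TensorProduct.assoc k Q P M).toLinearMap ∘ₗ
    LinearMap.rTensor M (TensorProduct.comm k P Q).toLinearMap ∘ₗ
    (TensorProduct.assoc k P Q M).symm.toLinearMap

variable {k n M}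

/-- `a′ = (id_V ⊗ a) ∘ (id_V ⊗ m ⊗ id_M) ∘ (τ_{R,V} ⊗ id_{R⊗M}) ∘ (id_R ⊗ Δ_W ⊗ id_M)`. -/
noncomputable def aPrime (a : (R k n) ⊗[k] M →ₗ[k] (V k n) ⊗[k] M) :
    (R k n) ⊗[k] ((R k n) ⊗[k] M) →ₗ[k] (V k n) ⊗[k] ((V k n) ⊗[k] M) :=
  LinearMap.lTensor (V k n) a ∘ₗ
    LinearMap.lTensor (V k n)
      (LinearMap.rTensor M (LinearMap.mul' k (R k n)) ∘ₗ
        (TensorProduct.assoc k (R k n) (R k n) M).symm.toLinearMap) ∘ₗ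
    swapL k ((R k n) ⊗[k] M) (R k n) (V k n) ∘ₗ
    LinearMap.lTensor (R k n)
      ((TensorProduct.assoc k (V k n) (R k n) M).toLinearMap ∘ₗ
        LinearMap.rTensor M (ΔW k n))

/-- `a″ = (τ_{V,V} ⊗ id_M) ∘ a′ ∘ (τ_{R,R} ⊗ id_M)`. -/
noncomputable def aDoublePrime (a : (R k n) ⊗[k] M →ₗ[k] (V k n) ⊗[k] M) :
    (R k n) ⊗[k] ((R k n) ⊗[k] M) →ₗ[k] (V k n) ⊗[k] ((V k n) ⊗[k] M) :=
  swapL k M (V k n) (V k n) ∘ₗ aPrime a ∘ₗ swapL k M (R k n) (R k n)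

/-- `a₁^X = (τ_{X,V} ⊗ id_M) ∘ (id_X ⊗ a) ∘ (τ_{R,X} ⊗ id_M) : R ⊗ X ⊗ M → V ⊗ X ⊗ M`. -/
noncomputable def aOne (a : (R k n) ⊗[k] M →ₗ[k] (V k n) ⊗[k] M)
    (X : Type) [AddCommGroup X] [Module k X] :
    (R k n) ⊗[k] (X ⊗[k] M) →ₗ[k] (V k n) ⊗[k] (X ⊗[k] M) :=
  swapL k M X (V k n) ∘ₗ LinearMap.lTensor X a ∘ₗ swapL k M (R k n) X

/-- The curried Witt identity `[a₁, a₂] = a′ − a″` for a map `a : R ⊗ M → V ⊗ M`,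
where `a₂ = id_R ⊗ a` and `[a₁,a₂] = a₁^V ∘ a₂ − (id_V ⊗ a) ∘ a₁^R`. -/
noncomputable def CurriedWittIdentity (a : (R k n) ⊗[k] M →ₗ[k] (V k n) ⊗[k] M) : Prop :=
  let lhs : (R k n) ⊗[k] ((R k n) ⊗[k] M) →ₗ[k] (V k n) ⊗[k] ((V k n) ⊗[k] M) :=
    aOne a ↥(V k n) ∘ₗ LinearMap.lTensor (R k n) a -
      LinearMap.lTensor ↥(V k n) a ∘ₗ aOne a (R k n)
  lhs = aPrime a - aDoublePrime a

end CurriedWitt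

open CurriedWitt

/-- The braiding of the first two factors of `V ⊗ V ⊗ M` (tensored with `id` on `M`). -/
noncomputable def glTau (k V M : Type) [CommRing k] [AddCommGroup V] [Module k V]
    [AddCommGroup M] [Module k M] :
    V ⊗[k] (V ⊗[k] M) →ₗ[k] V ⊗[k] (V ⊗[k] M) :=
  (TensorProduct.assoc k V V M).toLinearMap ∘ₗ
    LinearMap.rTensor M (TensorProduct.comm k V V).toLinearMap ∘ₗ
    (TensorProduct.assoc k V V M).symm.toLinearMap

/-- The curried gl identity for a map `c : V ⊗ M → V ⊗ M`:
with `τ` the braiding of the two `V`-factors of `V ⊗ V ⊗ M`, `c₂ = id_V ⊗ c` and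
`c₁ = τ ∘ c₂ ∘ τ`, it reads `c₁ ∘ c₂ - c₂ ∘ c₁ = τ ∘ (c₁ - c₂)`. -/
def CurriedGlIdentity (k V M : Type) [CommRing k] [AddCommGroup V] [Module k V]
    [AddCommGroup M] [Module k M] (c : V ⊗[k] M →ₗ[k] V ⊗[k] M) : Prop :=
  let τ : V ⊗[k] (V ⊗[k] M) →ₗ[k] V ⊗[k] (V ⊗[k] M) := glTau k V M
  let c₂ : V ⊗[k] (V ⊗[k] M) →ₗ[k] V ⊗[k] (V ⊗[k] M) := LinearMap.lTensor V c
  let c₁ : V ⊗[k] (V ⊗[k] M) →ₗ[k] V ⊗[k] (V ⊗[k] M) := τ ∘ₗ c₂ ∘ₗ τ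
  c₁ ∘ₗ c₂ - c₂ ∘ₗ c₁ = τ ∘ₗ (c₁ - c₂)


section Helpers

open LinearMap MvPolynomial CurriedWitt

variable {k : Type} [CommRing k] {n : ℕ} {M : Type} [AddCommGroup M] [Module k M]

@[simp] lemma swapL_tmul' {P Q : Type} [AddCommGroup P] [Module k P]
    [AddCommGroup Q] [Module k Q] (p : P) (q : Q) (m : M) :
    CurriedWitt.swapL k M P Q (p ⊗ₜ (q ⊗ₜ m)) = q ⊗ₜ (p ⊗ₜ m) := by
  simp [CurriedWitt.swapL]

lemma swapL_nat_left {P P' Q : Type} [AddCommGroup P] [Module k P]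
    [AddCommGroup P'] [Module k P'] [AddCommGroup Q] [Module k Q] (f : P' →ₗ[k] P) :
    CurriedWitt.swapL k M P Q ∘ₗ rTensor (Q ⊗[k] M) f
      = lTensor Q (rTensor M f) ∘ₗ CurriedWitt.swapL k M P' Q := by
  ext p q m; simp

lemma swapL_natL_apply {P P' Q : Type} [AddCommGroup P] [Module k P]
    [AddCommGroup P'] [Module k P'] [AddCommGroup Q] [Module k Q] (f : P' →ₗ[k] P)
    (x : P' ⊗[k] (Q ⊗[k] M)) :
    CurriedWitt.swapL k M P Q (rTensor (Q ⊗[k] M) f x)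
      = lTensor Q (rTensor M f) (CurriedWitt.swapL k M P' Q x) := by
  simpa using DFunLike.congr_fun (swapL_nat_left (M := M) f) x

lemma swapL_nat_right {P Q Q' : Type} [AddCommGroup P] [Module k P]
    [AddCommGroup Q'] [Module k Q'] [AddCommGroup Q] [Module k Q] (g : Q' →ₗ[k] Q) :
    CurriedWitt.swapL k M P Q ∘ₗ lTensor P (rTensor M g)
      = rTensor (P ⊗[k] M) g ∘ₗ CurriedWitt.swapL k M P Q' := by
  ext p q m; simp

lemma swapL_natR_apply {P Q Q' : Type} [AddCommGroup P] [Module k P]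
    [AddCommGroup Q'] [Module k Q'] [AddCommGroup Q] [Module k Q] (g : Q' →ₗ[k] Q)
    (x : P ⊗[k] (Q' ⊗[k] M)) :
    CurriedWitt.swapL k M P Q (lTensor P (rTensor M g) x)
      = rTensor (P ⊗[k] M) g (CurriedWitt.swapL k M P Q' x) := by
  simpa using DFunLike.congr_fun (swapL_nat_right (M := M) g) x

lemma swapL_swapL_apply {P Q : Type} [AddCommGroup P] [Module k P]
    [AddCommGroup Q] [Module k Q] (x : P ⊗[k] (Q ⊗[k] M)) :
    CurriedWitt.swapL k M Q P (CurriedWitt.swapL k M P Q x) = x := by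
  have h : CurriedWitt.swapL k M Q P ∘ₗ CurriedWitt.swapL k M P Q = LinearMap.id := by
    ext p q m; simp
  simpa using DFunLike.congr_fun h x

lemma rTensor_lTensor_apply {A A' B B' : Type} [AddCommGroup A] [Module k A]
    [AddCommGroup A'] [Module k A'] [AddCommGroup B] [Module k B]
    [AddCommGroup B'] [Module k B'] (f : A →ₗ[k] A') (g : B →ₗ[k] B') (y : A ⊗[k] B) :
    rTensor B' f (lTensor A g y) = lTensor A' g (rTensor B f y) := by
  simp only [← LinearMap.comp_apply, rTensor_comp_lTensor, lTensor_comp_rTensor]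

lemma lTensor_lTensor_apply {X A B C : Type} [AddCommGroup X] [Module k X]
    [AddCommGroup A] [Module k A] [AddCommGroup B] [Module k B]
    [AddCommGroup C] [Module k C] (f : B →ₗ[k] C) (g : A →ₗ[k] B) (y : X ⊗[k] A) :
    lTensor X f (lTensor X g y) = lTensor X (f ∘ₗ g) y := by
  simp only [← LinearMap.comp_apply, ← lTensor_comp]

lemma span_xV_top : Submodule.span k (Set.range (xV k n)) = ⊤ := by
  apply Submodule.map_injective_of_injective (V k n).injective_subtype
  rw [Submodule.map_span, Submodule.map_top, Submodule.range_subtype]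
  rw [← Set.range_comp]
  have : ((V k n).subtype ∘ xV k n) = (MvPolynomial.X : Fin n → R k n) := rfl
  rw [this]; rfl

lemma ΔW_X (j : Fin n) : ΔW k n (MvPolynomial.X j) = (xV k n j) ⊗ₜ 1 := by
  rw [ΔW, LinearMap.sum_apply]
  rw [Finset.sum_eq_single j]
  · simp
  · intro i _ hij
    simp [MvPolynomial.pderiv_X, Pi.single_apply, (Ne.symm hij : ¬ j = i)]
  · simp

lemma ΔW_subtype (w : V k n) : ΔW k n (w : R k n) = w ⊗ₜ 1 := by
  have : (ΔW k n) ∘ₗ (V k n).subtype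
      = (TensorProduct.mk k (V k n) (R k n)).flip 1 := by
    apply LinearMap.ext_on_range (span_xV_top (k := k) (n := n))
    intro i
    simp [ΔW_X, xV]
  exact DFunLike.congr_fun this w

lemma key (a : (R k n) ⊗[k] M →ₗ[k] (V k n) ⊗[k] M) (hW : CurriedWittIdentity a)
    (T C : (V k n) ⊗[k] ((V k n) ⊗[k] M) →ₗ[k] (V k n) ⊗[k] ((V k n) ⊗[k] M))
    (hT : T = CurriedWitt.swapL k M (V k n) (V k n))
    (hC : C = LinearMap.lTensor (V k n) (a ∘ₗ LinearMap.rTensor M (V k n).subtype)) :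
    (T ∘ₗ C ∘ₗ T) ∘ₗ C - C ∘ₗ (T ∘ₗ C ∘ₗ T) = T ∘ₗ ((T ∘ₗ C ∘ₗ T) - C) := by
  replace hW : aOne a ↥(V k n) ∘ₗ LinearMap.lTensor (R k n) a -
      LinearMap.lTensor ↥(V k n) a ∘ₗ aOne a (R k n) = aPrime a - aDoublePrime a := hW
  subst hT hC
  set ι := (V k n).subtype with hι
  set c := a ∘ₗ LinearMap.rTensor M ι with hc
  set J := LinearMap.lTensor (R k n) (LinearMap.rTensor M ι) ∘ₗ
      LinearMap.rTensor ((V k n) ⊗[k] M) ι with hJ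
  have hswapJ : ∀ x, CurriedWitt.swapL k M (R k n) (R k n) (J x)
      = J (CurriedWitt.swapL k M (V k n) (V k n) x) := by
    intro x
    rw [hJ]
    simp only [LinearMap.comp_apply]
    rw [swapL_natR_apply, swapL_natL_apply, rTensor_lTensor_apply]
  have h1 : ∀ x, LinearMap.lTensor (R k n) a (J x)
      = LinearMap.rTensor ((V k n) ⊗[k] M) ι (LinearMap.lTensor (V k n) c x) := by
    intro x
    rw [hJ]
    simp only [LinearMap.comp_apply]
    rw [lTensor_lTensor_apply, ← hc, ← rTensor_lTensor_apply]
  have h2 : ∀ y, aOne a (V k n) (LinearMap.rTensor ((V k n) ⊗[k] M) ι y)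
      = CurriedWitt.swapL k M (V k n) (V k n) (LinearMap.lTensor (V k n) c
          (CurriedWitt.swapL k M (V k n) (V k n) y)) := by
    intro y
    rw [aOne]
    simp only [LinearMap.comp_apply]
    rw [swapL_natL_apply, lTensor_lTensor_apply, ← hc]
  have h3 : ∀ x, LinearMap.lTensor (V k n) a (aOne a (R k n) (J x))
      = LinearMap.lTensor (V k n) c (CurriedWitt.swapL k M (V k n) (V k n)
          (LinearMap.lTensor (V k n) c (CurriedWitt.swapL k M (V k n) (V k n) x))) := by
    intro x
    rw [aOne]
    simp only [LinearMap.comp_apply]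
    rw [hswapJ, h1, swapL_natL_apply, lTensor_lTensor_apply, ← hc]
  have h4 : ∀ x, aPrime a (J x)
      = LinearMap.lTensor (V k n) c (CurriedWitt.swapL k M (V k n) (V k n) x) := by
    have h4' : aPrime a ∘ₗ J = LinearMap.lTensor (V k n) c ∘ₗ
        CurriedWitt.swapL k M (V k n) (V k n) := by
      ext v w m
      simp [aPrime, hJ, hc, hι, ΔW_subtype, mul_one, Submodule.subtype_apply]
    intro x
    simpa using DFunLike.congr_fun h4' x
  have h5 : ∀ x, aDoublePrime a (J x)
      = CurriedWitt.swapL k M (V k n) (V k n) (LinearMap.lTensor (V k n) c x) := by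
    intro x
    rw [aDoublePrime]
    simp only [LinearMap.comp_apply]
    rw [hswapJ, h4, swapL_swapL_apply]
  apply LinearMap.ext
  intro x
  have hWx := DFunLike.congr_fun hW (J x)
  simp only [LinearMap.sub_apply, LinearMap.comp_apply] at hWx ⊢
  rw [h1, h2, h3, h4, h5] at hWx
  rw [map_sub, swapL_swapL_apply]
  exact hWx

end Helpers

/-- if `a : R ⊗ M → V ⊗ M` satisfies the curried Witt identity, then
`a⁰ = a ∘ (ι ⊗ id_M) : V ⊗ M → V ⊗ M`, where `ι : V → R` is the inclusion of the span
of the variables, satisfies the curried gl identity. -/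
theorem statement7 (k : Type) [CommRing k] (n : ℕ) (M : Type) [AddCommGroup M] [Module k M]
    (a : (R k n) ⊗[k] M →ₗ[k] (V k n) ⊗[k] M)
    (hW : CurriedWittIdentity a) :
    CurriedGlIdentity k (V k n) M (a ∘ₗ LinearMap.rTensor M (V k n).subtype) := by
  unfold CurriedGlIdentity
  intro τ c₂ c₁
  exact key a hW (glTau k (V k n) M)
    (LinearMap.lTensor (V k n) (a ∘ₗ LinearMap.rTensor M (V k n).subtype)) rfl rfl
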